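/- arXiv:1601.05176 — 2 statements merged into one kernel-verified Lean document; each statement's English description precedes it below -/
import Mathlib

section
/- Let B ⊆ A, let a ∈ A, and let u, v be traces over a dependency alphabet such that the trace ua is prime. Then av is B-prime if and only if uav is B-prime. -/
namespace MazTrace

variable {A : Type*}

/-- Smallest equivalence on words over `A` generated by commuting two adjacent
independent letters (`a I b` iff `¬ D a b`). -/
inductive TraceRel (D : A → A → Prop) : List A → List A → Prop
  | refl (u : List A) : TraceRel D u u
  | swap (u v : List A) (a b : A) (h : ¬ D a b) :
      TraceRel D (u ++ a :: b :: v) (u ++ b :: a :: v)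
  | symm {u v : List A} : TraceRel D u v → TraceRel D v u
  | trans {u v w : List A} : TraceRel D u v → TraceRel D v w → TraceRel D u w

theorem TraceRel.append_right {D : A → A → Prop} {u u' : List A} (w : List A)
    (h : TraceRel D u u') : TraceRel D (u ++ w) (u' ++ w) := by
  induction h with
  | refl u => exact .refl _
  | swap x y a b hab =>
      simpa [List.append_assoc] using TraceRel.swap (D := D) x (y ++ w) a b hab
  | symm _ ih => exact ih.symm
  | trans _ _ ih1 ih2 => exact ih1.trans ih2

theorem TraceRel.append_left {D : A → A → Prop} {v v' : List A} (w : List A)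
    (h : TraceRel D v v') : TraceRel D (w ++ v) (w ++ v') := by
  induction h with
  | refl u => exact .refl _
  | swap x y a b hab =>
      simpa [List.append_assoc] using TraceRel.swap (D := D) (w ++ x) y a b hab
  | symm _ ih => exact ih.symm
  | trans _ _ ih1 ih2 => exact ih1.trans ih2

def traceSetoid (D : A → A → Prop) : Setoid (List A) :=
  ⟨TraceRel D, ⟨TraceRel.refl, TraceRel.symm, TraceRel.trans⟩⟩

/-- A Mazurkiewicz trace: an equivalence class of words. -/
def Trace (D : A → A → Prop) : Type _ := Quotient (traceSetoid D)

namespace Trace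

variable {D : A → A → Prop}

/-- The trace of a word. -/
def mk (D : A → A → Prop) (u : List A) : Trace D := Quotient.mk (traceSetoid D) u

/-- The empty trace. -/
instance : One (Trace D) := ⟨mk D []⟩

/-- Concatenation of traces, induced by concatenation of words. -/
instance : Mul (Trace D) :=
  ⟨fun s t => Quotient.liftOn₂ s t (fun u v => mk D (u ++ v))
    (fun _ _ _ _ hu hv =>
      Quotient.sound ((hu.append_right _).trans (TraceRel.append_left _ hv)))⟩

instance : Nonempty (Trace D) := ⟨1⟩

/-- Length of a trace: the length of any of its linearizations. -/
def length (t : Trace D) : ℕ :=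
  Quotient.liftOn t List.length (by
    intro u v h
    induction h with
    | refl u => rfl
    | swap x y a b hab => simp
    | symm _ ih => exact ih.symm
    | trans _ _ ih1 ih2 => exact ih1.trans ih2)

/-- The set of letters of a trace. -/
def alph (t : Trace D) : Set A :=
  Quotient.liftOn t (fun u => {a | a ∈ u}) (by
    intro u v h
    induction h with
    | refl u => rfl
    | swap x y a b hab => ext c; simp [List.mem_append]; tauto
    | symm _ ih => exact ih.symm
    | trans _ _ ih1 ih2 => exact ih1.trans ih2)

/-- Prefix order on traces: `s ⊑ t` iff `s * w = t` for some trace `w`. -/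
def Prefix (s t : Trace D) : Prop := ∃ w, s * w = t

/-- `t I B` : every letter of the trace `t` is independent of every element of `B`. -/
def IndepSet (t : Trace D) (B : Set A) : Prop := ∀ a ∈ t.alph, ∀ b ∈ B, ¬ D a b

/-- `s I t` : every letter of `s` is independent of every letter of `t`. -/
def Indep (s t : Trace D) : Prop := ∀ a ∈ s.alph, ∀ b ∈ t.alph, ¬ D a b

/-- `a I t` : the letter `a` is independent of every letter of the trace `t`. -/
def IndepLetter (a : A) (t : Trace D) : Prop := ∀ c ∈ t.alph, ¬ D a c

/-- `w` is the `B`-view of `t`: the shortest prefix of `t` such that `t = w·v`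
for some trace `v` with `v I B`. -/
def IsView (B : Set A) (t w : Trace D) : Prop :=
  (∃ v, w * v = t ∧ v.IndepSet B) ∧
  ∀ w' v', w' * v' = t → v'.IndepSet B → w.length ≤ w'.length

/-- The `B`-view of a trace. -/
noncomputable def view (B : Set A) (t : Trace D) : Trace D :=
  Classical.epsilon (IsView B t)

/-- A trace is `B`-prime if every linearization of it ends with a letter of `B`. -/
def IsBPrime (B : Set A) (t : Trace D) : Prop :=
  ∀ u : List A, mk D u = t → ∀ a : A, u.getLast? = some a → a ∈ B

/-- A trace is prime if all its linearizations have the same last letter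
(the empty trace counts as prime). -/
def IsPrime (t : Trace D) : Prop :=
  ∀ u v : List A, mk D u = t → mk D v = t → u.getLast? = v.getLast?

end Trace

end MazTrace

/-!
If a linearization of `u a v` ends with `c`, then no letter after the last occurrence of `c`
depends on `c`: for `b` dependent on `c`, the projection onto `{b, c}` is invariant under
commutation. So that occurrence of `c` can be commuted to the end of the word. If it lies in
`a v`, this gives a linearization of `a v` ending with `c`. If it lies in `u`, it commutes past
`a` as well and `u a` has a linearization ending with `c ≠ a`, contradicting primality of `u a`.
-/

theorem List.eq_append_cons_notMem_suffix_of_mem {α : Type*} {c : α} {l : List α} (h : c ∈ l) :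
    ∃ s t, l = s ++ c :: t ∧ c ∉ t := by
  obtain ⟨s, t, hl, hc⟩ := List.eq_append_cons_of_mem (List.mem_reverse.2 h)
  exact ⟨t.reverse, s.reverse, by simpa using congrArg List.reverse hl, by simpa using hc⟩

namespace MazTrace

variable {A : Type*} {D : A → A → Prop}

namespace TraceRel

theorem perm {u v : List A} (h : TraceRel D u v) : u.Perm v := by
  induction h with
  | refl u => exact .refl u
  | swap x y a b _ => exact (List.Perm.swap b a y).append_left x
  | symm _ ih => exact ih.symm
  | trans _ _ ih₁ ih₂ => exact ih₁.trans ih₂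

theorem filter_eq {s : Set A} [DecidablePred (· ∈ s)] (hs : s.Pairwise D) {u v : List A}
    (h : TraceRel D u v) : u.filter (· ∈ s) = v.filter (· ∈ s) := by
  induction h with
  | refl u => rfl
  | swap x y a b hab =>
    by_cases heq : a = b
    · subst heq; rfl
    have hnot : ¬ (a ∈ s ∧ b ∈ s) := fun ⟨ha, hb⟩ => hab (hs ha hb heq)
    by_cases ha : a ∈ s <;> by_cases hb : b ∈ s <;> simp_all [List.filter_append]
  | symm _ ih => exact ih.symm
  | trans _ _ ih₁ ih₂ => exact ih₁.trans ih₂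

theorem cons_append_singleton {c : A} :
    ∀ {y : List A}, (∀ b ∈ y, ¬ D c b) → TraceRel D (c :: y) (y ++ [c])
  | [], _ => .refl _
  | b :: y, h =>
    (TraceRel.swap [] y c b (h b List.mem_cons_self)).trans
      ((cons_append_singleton fun b' hb' => h b' (List.mem_cons_of_mem _ hb')).append_left [b])

theorem not_dep_of_append_singleton (hsymm : ∀ a b, D a b → D b a) {x w r : List A} {c : A}
    (h : TraceRel D (x ++ [c]) (w ++ r)) (hc : c ∉ r) : ∀ b ∈ r, ¬ D c b := by
  classical
  intro b hb hcb
  have hpair : Set.Pairwise {b, c} D := Set.pairwise_pair.2 fun _ => ⟨hsymm _ _ hcb, hcb⟩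
  have hfilter := h.filter_eq hpair
  have hr : r.filter (· ∈ ({b, c} : Set A)) ≠ [] :=
    List.ne_nil_of_mem (List.mem_filter.2 ⟨hb, by simp⟩)
  have hlast : (r.filter (· ∈ ({b, c} : Set A))).getLast? = some c := by
    rw [← List.getLast?_append_of_ne_nil _ hr, ← List.filter_append, ← hfilter]
    simp
  exact hc (List.mem_of_mem_filter (List.mem_of_getLast? hlast))

theorem exists_append_singleton_of_isPrime (hsymm : ∀ a b, D a b → D b a)
    {p q x : List A} {a c : A} (hpa : (Trace.mk D (p ++ [a])).IsPrime)
    (h : TraceRel D (x ++ [c]) (p ++ a :: q)) : ∃ y, TraceRel D (y ++ [c]) (a :: q) := by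
  by_cases hcq : c ∈ a :: q
  · obtain ⟨s, t, hst, hct⟩ := List.eq_append_cons_notMem_suffix_of_mem hcq
    rw [hst] at h ⊢
    have hind := not_dep_of_append_singleton hsymm (w := p ++ s ++ [c]) (by simpa using h) hct
    exact ⟨s ++ t, by simpa using ((cons_append_singleton hind).append_left s).symm⟩
  · exfalso
    have hcp : c ∈ p := by
      simpa [hcq] using h.perm.subset (List.mem_append_right x List.mem_cons_self)
    obtain ⟨s, t, rfl, hct⟩ := List.eq_append_cons_notMem_suffix_of_mem hcp
    have hind := not_dep_of_append_singleton hsymm (w := s ++ [c]) (r := t ++ a :: q)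
      (by simpa using h) (by simp_all)
    have hmove : TraceRel D (s ++ c :: t ++ [a]) (s ++ t ++ [a] ++ [c]) := by
      simpa using (cons_append_singleton (y := t ++ [a])
        fun b hb => hind b (by simp at hb ⊢; tauto)).append_left s
    have hac := hpa _ _ rfl (Quotient.sound hmove.symm)
    simp only [List.getLast?_append, List.getLast?_singleton, Option.some_or,
      Option.some.injEq] at hac
    exact hcq (hac ▸ List.mem_cons_self)

end TraceRel

namespace Trace

theorem mk_append (u v : List A) : mk D (u ++ v) = mk D u * mk D v := rfl

theorem mk_eq_mk_iff {u v : List A} : mk D u = mk D v ↔ TraceRel D u v := Quotient.eq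

theorem exists_mk_eq (t : Trace D) : ∃ u, mk D u = t := Quotient.exists_rep t

protected theorem mul_assoc (s t r : Trace D) : s * t * r = s * (t * r) := by
  obtain ⟨p, rfl⟩ := s.exists_mk_eq
  obtain ⟨q, rfl⟩ := t.exists_mk_eq
  obtain ⟨w, rfl⟩ := r.exists_mk_eq
  simp only [← mk_append, List.append_assoc]

theorem IsBPrime.of_mul_left {B : Set A} {s t : Trace D} (h : (s * t).IsBPrime B) :
    t.IsBPrime B := by
  obtain ⟨p, rfl⟩ := s.exists_mk_eq
  rintro w rfl c hc
  exact h (p ++ w) rfl c (by simp [hc])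

theorem IsBPrime.mul_left_of_isPrime (hsymm : ∀ a b, D a b → D b a) {B : Set A} {a : A}
    {u v : Trace D} (hua : (u * mk D [a]).IsPrime) (h : (mk D [a] * v).IsBPrime B) :
    (u * mk D [a] * v).IsBPrime B := by
  obtain ⟨p, rfl⟩ := u.exists_mk_eq
  obtain ⟨q, rfl⟩ := v.exists_mk_eq
  intro w hw c hc
  obtain ⟨x, rfl⟩ := List.getLast?_eq_some_iff.1 hc
  rw [← mk_append, ← mk_append, mk_eq_mk_iff, List.append_assoc] at hw
  obtain ⟨y, hy⟩ := TraceRel.exists_append_singleton_of_isPrime hsymm hua hw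
  exact h _ (mk_eq_mk_iff.2 hy) c List.getLast?_concat

end Trace

end MazTrace

open MazTrace in
theorem bprime_cons_iff_of_prime_general {A : Type*} (D : A → A → Prop)
    (hsymm : ∀ a b, D a b → D b a)
    (B : Set A) (a : A) (u v : Trace D)
    (hua : (u * Trace.mk D [a]).IsPrime) :
    (Trace.mk D [a] * v).IsBPrime B ↔ (u * Trace.mk D [a] * v).IsBPrime B :=
  ⟨Trace.IsBPrime.mul_left_of_isPrime hsymm hua,
    fun h => (Trace.mul_assoc u _ v ▸ h).of_mul_left⟩

open MazTrace in
/-- If the trace `ua` is prime, then `av` is `B`-prime iff `uav` is `B`-prime. -/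
theorem bprime_cons_iff_of_prime {A : Type*} [Finite A] (D : A → A → Prop)
    (hrefl : ∀ a, D a a) (hsymm : ∀ a b, D a b → D b a)
    (B : Set A) (a : A) (u v : Trace D)
    (hua : (u * Trace.mk D [a]).IsPrime) :
    (Trace.mk D [a] * v).IsBPrime B ↔ (u * Trace.mk D [a] * v).IsBPrime B :=
  bprime_cons_iff_of_prime_general D hsymm B a u v hua
end

section
/- Let B ⊆ A, let a ∈ A, and let u, v, w be traces over a dependency alphabet such that the trace ua is prime. Then uav ⊑ view_B(uavw) if and only if av ⊑ view_B(avw). -/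
/-!
Erasing the first occurrence of a letter respects trace equivalence, so the trace monoid is
left cancellative; with the invariance of projections onto dependent pairs of letters this
gives Levi's lemma: `x y = u z` factors as `x = n w₂`, `u = n w₃`, `y = w₃ w₄`, `z = w₂ w₄`
with `w₂ I w₃`. By Levi's lemma the `B`-view of `t` is the least prefix of `t` with a
`B`-independent remainder, so `p ⊑ view_B t` iff `p ⊑ x` for every `t = x y` with `y I B`.

Forwards, this reduces to cancelling `u`. Backwards, apply Levi's lemma to `x y = u (a v w)`:
then `a v ⊑ w₂`, so `a ∈ w₂` and `w₃ I a`; since `u a = n w₃ a = n a w₃` is prime,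
`w₃ = 1`, and `u a v ⊑ u w₂ = x`.
-/

namespace MazTrace

variable {A : Type*} {D : A → A → Prop}

theorem TraceRel.erase [DecidableEq A] {u v : List A} (h : TraceRel D u v) (a : A) :
    TraceRel D (u.erase a) (v.erase a) := by
  induction h with
  | refl u => exact .refl _
  | swap x y c d hcd =>
    simp only [List.erase_append]
    split_ifs
    · exact .swap _ _ c d hcd
    · by_cases hc : c = a <;> by_cases hd : d = a
      · subst hc hd; exact .refl _
      · subst hc
        simp only [List.erase_cons_head, beq_iff_eq, hd, not_false_eq_true, List.erase_cons_tail]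
        exact .refl _
      · subst hd
        simp only [List.erase_cons_head, beq_iff_eq, hc, not_false_eq_true, List.erase_cons_tail]
        exact .refl _
      · simpa [hc, hd] using .swap x (y.erase a) c d hcd
  | symm _ ih => exact ih.symm
  | trans _ _ ih₁ ih₂ => exact ih₁.trans ih₂

theorem TraceRel.filter_eq_s11 {p : A → Bool} (hp : ∀ c d, p c → p d → c ≠ d → D c d)
    {u v : List A} (h : TraceRel D u v) : u.filter p = v.filter p := by
  induction h with
  | refl u => rfl
  | swap x y c d hcd =>
    rcases eq_or_ne c d with rfl | hne
    · rfl
    have hpcd : ¬ (p c ∧ p d) := fun ⟨hc, hd⟩ => hcd (hp c d hc hd hne)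
    cases hc : p c <;> cases hd : p d <;> simp_all
  | symm _ ih => exact ih.symm
  | trans _ _ ih₁ ih₂ => exact ih₁.trans ih₂

namespace Trace

theorem mk_mul_mk (u v : List A) : mk D u * mk D v = mk D (u ++ v) := rfl

theorem one_eq_mk_nil : (1 : Trace D) = mk D [] := rfl

@[elab_as_elim]
theorem ind {motive : Trace D → Prop} (mk : ∀ u, motive (mk D u)) (t : Trace D) : motive t :=
  Quotient.ind mk t

instance : Monoid (Trace D) where
  mul_assoc s t r := by
    induction s using ind; induction t using ind; induction r using ind
    simp only [mk_mul_mk, List.append_assoc]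
  one_mul t := by
    induction t using ind
    rfl
  mul_one t := by
    induction t using ind
    simp only [one_eq_mk_nil, mk_mul_mk, List.append_nil]

theorem mk_cons (a : A) (u : List A) : mk D (a :: u) = mk D [a] * mk D u := rfl

instance : IsLeftCancelMul (Trace D) where
  mul_left_cancel s t r h := by
    classical
    induction s using ind with | mk u => ?_
    induction t using ind; induction r using ind
    simp only [mk_mul_mk, mk_eq_mk_iff] at h ⊢
    induction u with
    | nil => exact h
    | cons a u ih =>
      exact ih (by simpa only [List.cons_append, List.erase_cons_head] using h.erase a)

theorem mem_alph_mul {a : A} {s t : Trace D} : a ∈ (s * t).alph ↔ a ∈ s.alph ∨ a ∈ t.alph := by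
  induction s using ind; induction t using ind
  exact List.mem_append

theorem notMem_alph_one {a : A} : a ∉ (1 : Trace D).alph := List.not_mem_nil

theorem mk_singleton_mul_comm {a b : A} (h : ¬ D a b) :
    mk D [a] * mk D [b] = mk D [b] * mk D [a] :=
  Quotient.sound (TraceRel.swap [] [] a b h)

theorem mk_singleton_mul_comm_of_indepLetter {a : A} {t : Trace D} (h : IndepLetter a t) :
    mk D [a] * t = t * mk D [a] := by
  induction t using ind with | mk u => ?_
  induction u with
  | nil => rfl
  | cons c u ih =>
    rw [mk_cons c u, ← mul_assoc, mk_singleton_mul_comm (h c (List.mem_cons_self)), mul_assoc,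
      ih (fun d hd => h d (List.mem_cons_of_mem c hd)), mul_assoc]

/-- The two-letter case of Levi's lemma: distinct first letters must commute. -/
theorem eq_of_mk_singleton_mul_eq (hsymm : ∀ a b, D a b → D b a) {a b : A} (hab : a ≠ b)
    {s t : Trace D} (h : mk D [a] * s = mk D [b] * t) :
    ¬ D a b ∧ ∃ r, s = mk D [b] * r ∧ t = mk D [a] * r := by
  classical
  induction s using ind with | mk u => ?_
  induction t using ind with | mk v => ?_
  have hrel : TraceRel D (a :: u) (b :: v) := mk_eq_mk_iff.1 h
  have hindep : ¬ D a b := fun hD => by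
    have := hrel.filter_eq_s11 (p := fun x => x = a ∨ x = b) (by
      intro c d hc hd hcd
      simp only [decide_eq_true_eq] at hc hd
      rcases hc with rfl | rfl <;> rcases hd with rfl | rfl
      all_goals first | exact absurd rfl hcd | exact hD | exact hsymm _ _ hD)
    simp [hab, hab.symm] at this
  have hv : mk D v = mk D [a] * mk D (u.erase b) := by
    have := (hrel.erase b).symm
    rwa [List.erase_cons_head, List.erase_cons_tail (by simpa using hab), ← mk_eq_mk_iff]
      at this
  refine ⟨hindep, mk D (u.erase b), mul_left_cancel (a := mk D [a]) ?_, hv⟩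
  rw [h, hv, ← mul_assoc, ← mul_assoc, mk_singleton_mul_comm (fun hD => hindep (hsymm _ _ hD))]

theorem mk_singleton_mul_eq_mul (hsymm : ∀ a b, D a b → D b a) {a : A} {s u z : Trace D}
    (h : mk D [a] * s = u * z) :
    (∃ u', u = mk D [a] * u') ∨ (IndepLetter a u ∧ ∃ z', z = mk D [a] * z') := by
  induction u using ind with | mk l => ?_
  induction l generalizing s with
  | nil => exact .inr ⟨fun _ hc => absurd hc notMem_alph_one, s, (one_mul z).symm.trans h.symm⟩
  | cons b l ih =>
    rw [mk_cons b l, mul_assoc] at h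
    obtain rfl | hab := eq_or_ne a b
    · exact .inl ⟨mk D l, mk_cons a l⟩
    obtain ⟨hindep, r, -, hr⟩ := eq_of_mk_singleton_mul_eq hsymm hab h
    rcases ih hr.symm with ⟨u', hu'⟩ | ⟨hl, hz⟩
    · refine .inl ⟨mk D [b] * u', ?_⟩
      rw [mk_cons b l, hu', ← mul_assoc, ← mul_assoc,
        mk_singleton_mul_comm fun hD => hindep (hsymm _ _ hD)]
    · refine .inr ⟨fun c hc => ?_, hz⟩
      rcases List.mem_cons.1 hc with rfl | hc
      exacts [hindep, hl c hc]

theorem levi (hsymm : ∀ a b, D a b → D b a) {x y u z : Trace D} (h : x * y = u * z) :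
    ∃ n w₂ w₃ w₄ : Trace D,
      x = n * w₂ ∧ u = n * w₃ ∧ y = w₃ * w₄ ∧ z = w₂ * w₄ ∧ Indep w₂ w₃ := by
  induction x using ind with | mk l => ?_
  induction l generalizing u z with
  | nil =>
    exact ⟨1, 1, u, z, (mul_one 1).symm, (one_mul u).symm, (one_mul y).symm.trans h,
      (one_mul z).symm, fun _ he => absurd he notMem_alph_one⟩
  | cons a l ih =>
    rw [mk_cons a l, mul_assoc] at h
    rcases mk_singleton_mul_eq_mul hsymm h with ⟨u', rfl⟩ | ⟨ha, z', rfl⟩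
    · obtain ⟨n, w₂, w₃, w₄, hl, rfl, hy, hz, hw⟩ :=
        ih (mul_left_cancel (h.trans (mul_assoc ..)))
      exact ⟨mk D [a] * n, w₂, w₃, w₄, by rw [mk_cons a l, hl, mul_assoc], (mul_assoc ..).symm,
        hy, hz, hw⟩
    · rw [← mul_assoc u, ← mk_singleton_mul_comm_of_indepLetter ha, mul_assoc] at h
      obtain ⟨n, w₂, w₃, w₄, hl, rfl, hy, rfl, hw⟩ := ih (mul_left_cancel h)
      refine ⟨n, mk D [a] * w₂, w₃, w₄, ?_, rfl, hy, (mul_assoc ..).symm, fun e he f hf => ?_⟩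
      · rw [mk_cons a l, hl, ← mul_assoc,
          mk_singleton_mul_comm_of_indepLetter fun c hc => ha c (mem_alph_mul.2 (.inl hc)),
          mul_assoc]
      rcases mem_alph_mul.1 he with he | he
      · rw [List.mem_singleton.1 he]
        exact ha f (mem_alph_mul.2 (.inr hf))
      · exact hw e he f hf

theorem length_mul (s t : Trace D) : (s * t).length = s.length + t.length := by
  induction s using ind; induction t using ind
  exact List.length_append

theorem eq_one_of_length_eq_zero {t : Trace D} (h : t.length = 0) : t = 1 := by
  induction t using ind with | mk u => ?_
  rw [List.eq_nil_of_length_eq_zero h]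
  rfl

theorem indepSet_mul {s t : Trace D} {B : Set A} :
    (s * t).IndepSet B ↔ s.IndepSet B ∧ t.IndepSet B := by
  simp only [IndepSet, mem_alph_mul, or_imp, forall_and]

theorem Prefix.trans {s t r : Trace D} : s.Prefix t → t.Prefix r → s.Prefix r
  | ⟨w, hw⟩, ⟨w', hw'⟩ => ⟨w * w', by rw [← mul_assoc, hw, hw']⟩

theorem Prefix.alph_subset {s t : Trace D} : s.Prefix t → s.alph ⊆ t.alph
  | ⟨_, hw⟩, _, ha => hw ▸ mem_alph_mul.2 (.inl ha)

theorem mul_prefix_mul_iff {u s t : Trace D} : (u * s).Prefix (u * t) ↔ s.Prefix t :=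
  ⟨fun ⟨w, hw⟩ => ⟨w, mul_left_cancel (by rw [← mul_assoc, hw])⟩,
    fun ⟨w, hw⟩ => ⟨w, by rw [mul_assoc, hw]⟩⟩

theorem exists_isView (B : Set A) (t : Trace D) : ∃ V, IsView B t V := by
  classical
  have hP : ∃ n, ∃ x y : Trace D, x * y = t ∧ y.IndepSet B ∧ x.length = n :=
    ⟨t.length, t, 1, mul_one t, fun _ ha => absurd ha notMem_alph_one, rfl⟩
  obtain ⟨x, y, hxy, hy, hlen⟩ := Nat.find_spec hP
  exact ⟨x, ⟨y, hxy, hy⟩, fun x' y' h h' => hlen ▸ Nat.find_min' hP ⟨x', y', h, h', rfl⟩⟩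

theorem isView_view (B : Set A) (t : Trace D) : IsView B t (view B t) :=
  Classical.epsilon_spec (exists_isView B t)

/-- The view is the least prefix, not merely a shortest one. -/
theorem IsView.prefix_of_mul_eq (hsymm : ∀ a b, D a b → D b a) {B : Set A} {t V x y : Trace D}
    (hV : IsView B t V) (hxy : x * y = t) (hy : y.IndepSet B) : V.Prefix x := by
  obtain ⟨⟨r, hVr, hr⟩, hmin⟩ := hV
  obtain ⟨n, w₂, w₃, w₄, rfl, rfl, rfl, rfl, -⟩ := levi hsymm (hxy.trans hVr.symm)
  have hlen := hmin n (w₃ * (w₂ * w₄)) (by rw [← hVr, mul_assoc])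
    (indepSet_mul.2 ⟨(indepSet_mul.1 hy).1, hr⟩)
  rw [length_mul] at hlen
  exact ⟨w₂, by rw [eq_one_of_length_eq_zero (by omega : w₃.length = 0), mul_one]⟩

theorem prefix_view_iff (hsymm : ∀ a b, D a b → D b a) {B : Set A} {p t : Trace D} :
    p.Prefix (view B t) ↔ ∀ x y, x * y = t → y.IndepSet B → p.Prefix x := by
  refine ⟨fun hp x y hxy hy => hp.trans ((isView_view B t).prefix_of_mul_eq hsymm hxy hy),
    fun h => ?_⟩
  obtain ⟨⟨r, hr, hrB⟩, -⟩ := isView_view B t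
  exact h _ _ hr hrB

theorem IsPrime.eq_one_of_indepLetter (hrefl : ∀ a, D a a) {n s : Trace D} {a : A}
    (hp : (n * s * mk D [a]).IsPrime) (hs : IndepLetter a s) : s = 1 := by
  induction n using ind with | mk l => ?_
  induction s using ind with | mk m => ?_
  rcases List.eq_nil_or_concat m with rfl | ⟨m, c, rfl⟩
  · rfl
  rw [List.concat_eq_append] at *
  have hlin : mk D l * mk D (m ++ [c]) * mk D [a] = mk D ((l ++ a :: m) ++ [c]) := by
    rw [mul_assoc, ← mk_singleton_mul_comm_of_indepLetter hs]
    simp only [mk_mul_mk, List.append_assoc, List.cons_append, List.nil_append]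
  have hlast := hp (l ++ (m ++ [c]) ++ [a]) _ rfl hlin.symm
  rw [List.getLast?_concat, List.getLast?_concat, Option.some_inj] at hlast
  exact absurd (hrefl a) (hs a (hlast ▸ List.mem_concat_self))

end Trace

end MazTrace

open MazTrace in
theorem prefix_view_prime_iff_general {A : Type*} (D : A → A → Prop)
    (hrefl : ∀ a, D a a) (hsymm : ∀ a b, D a b → D b a)
    (B : Set A) (a : A) (u v w : Trace D)
    (hua : (u * Trace.mk D [a]).IsPrime) :
    (u * Trace.mk D [a] * v).Prefix (Trace.view B (u * Trace.mk D [a] * v * w)) ↔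
      (Trace.mk D [a] * v).Prefix (Trace.view B (Trace.mk D [a] * v * w)) := by
  simp only [Trace.prefix_view_iff hsymm]
  constructor
  · intro H x y hxy hy
    rw [← Trace.mul_prefix_mul_iff (u := u), ← mul_assoc]
    exact H (u * x) y (by rw [mul_assoc, hxy, mul_assoc, mul_assoc, mul_assoc]) hy
  · intro H x y hxy hy
    have hxy' : x * y = u * (Trace.mk D [a] * v * w) := by simp only [hxy, mul_assoc]
    obtain ⟨n, w₂, w₃, w₄, rfl, rfl, rfl, hz, hind⟩ := Trace.levi hsymm hxy'
    have hav : (Trace.mk D [a] * v).Prefix w₂ := H w₂ w₄ hz.symm (Trace.indepSet_mul.1 hy).2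
    have ha : a ∈ w₂.alph :=
      hav.alph_subset (Trace.mem_alph_mul.2 (.inl (List.mem_singleton_self a)))
    obtain rfl : w₃ = 1 := hua.eq_one_of_indepLetter hrefl fun c hc => hind a ha c hc
    rw [mul_one, mul_assoc]
    exact Trace.mul_prefix_mul_iff.2 hav

open MazTrace in
/-- If `ua` is prime, then `uav ⊑ view_B(uavw)` iff `av ⊑ view_B(avw)`. -/
theorem prefix_view_prime_iff {A : Type*} [Finite A] (D : A → A → Prop)
    (hrefl : ∀ a, D a a) (hsymm : ∀ a b, D a b → D b a)
    (B : Set A) (a : A) (u v w : Trace D)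
    (hua : (u * Trace.mk D [a]).IsPrime) :
    (u * Trace.mk D [a] * v).Prefix (Trace.view B (u * Trace.mk D [a] * v * w)) ↔
      (Trace.mk D [a] * v).Prefix (Trace.view B (Trace.mk D [a] * v * w)) :=
  prefix_view_prime_iff_general D hrefl hsymm B a u v w hua
end
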